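/- Let α > 0, let n ∈ ℕ with n ≥ 1, and let x > 0. Then the left-sided Riemann–Liouville fractional integral of order α (with base point 0) of the thin-plate spline τ ↦ τ^(2n) ln τ satisfies (1/Γ(α)) ∫_0^x (x - τ)^(α-1) τ^(2n) ln(τ) dτ = (Γ(2n+1)/Γ(2n+1+α)) · x^(2n+α) · ( ln(x) + Ψ(2n+1) - Ψ(2n+1+α) ), where Ψ(t) = Γ'(t)/Γ(t) is the digamma function. -/

import Mathlib

/-!
For `s > -1` the Beta integral gives
`∫₀ˣ (x - τ)^(α-1) τ^s dτ = Γ(s+1) Γ(α) / Γ(s+1+α) · x^(s+α)`.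
Differentiating both sides in `s` at `s = 2n` proves the claim. On the left we differentiate under
the integral sign, which produces the factor `log τ`: for `s` near `2n` the `s`-derivative
`(x - τ)^(α-1) τ^s log τ` of the integrand is dominated by a multiple of the integrable weight
`(x - τ)^(α-1)`. On the right, the logarithmic derivative of the closed form is
`log x + Ψ(s+1) - Ψ(s+1+α)`.
-/

open MeasureTheory Real Set

theorem integral_sub_rpow_mul_rpow {α s x : ℝ} (hα : 0 < α) (hs : -1 < s) (hx : 0 < x) :
    ∫ τ in (0 : ℝ)..x, (x - τ) ^ (α - 1) * τ ^ s =
      Gamma (s + 1) * Gamma α / Gamma (s + 1 + α) * x ^ (s + α) := by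
  have hB : Complex.betaIntegral (s + 1 : ℝ) α =
      (Gamma (s + 1) * Gamma α / Gamma (s + 1 + α) : ℝ) := by
    simp only [Complex.ofReal_mul, Complex.ofReal_div, ← Complex.Gamma_ofReal, Complex.ofReal_add]
    rw [Complex.Gamma_mul_Gamma_eq_betaIntegral (by simp; linarith) (by simpa using hα),
      mul_div_cancel_left₀]
    rw [← Complex.ofReal_add, ← Complex.ofReal_add, Complex.Gamma_ofReal]
    exact_mod_cast (Gamma_pos_of_pos (by linarith)).ne'
  have hscaled := Complex.betaIntegral_scaled (s + 1 : ℝ) α hx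
  rw [hB, show ((s + 1 : ℝ) : ℂ) + α - 1 = (s + α : ℝ) by push_cast; ring,
    ← Complex.ofReal_cpow hx.le, ← Complex.ofReal_mul] at hscaled
  apply Complex.ofReal_injective
  rw [← intervalIntegral.integral_ofReal, mul_comm, ← hscaled]
  refine intervalIntegral.integral_congr fun τ hτ ↦ ?_
  rw [uIcc_of_le hx.le] at hτ
  simp only [Complex.ofReal_mul, Complex.ofReal_cpow hτ.1,
    Complex.ofReal_cpow (sub_nonneg.2 hτ.2)]
  push_cast
  ring_nf

theorem intervalIntegrable_sub_rpow {α : ℝ} (hα : 0 < α) (x : ℝ) :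
    IntervalIntegrable (fun τ ↦ (x - τ) ^ (α - 1)) volume 0 x := by
  simpa using ((intervalIntegral.intervalIntegrable_rpow' (r := α - 1) (a := 0) (b := x)
    (by linarith)).comp_sub_left x).symm

theorem abs_rpow_mul_log_le {a b s τ x : ℝ} (ha : 0 < a) (has : a ≤ s) (hsb : s ≤ b)
    (hτ : 0 < τ) (hτx : τ ≤ x) : |τ ^ s * log τ| ≤ 1 / a + x ^ b * |log x| := by
  have hx : 0 < x := hτ.trans_le hτx
  rcases le_or_gt τ 1 with hτ1 | hτ1
  · calc |τ ^ s * log τ| ≤ |log τ * τ ^ a| := by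
          rw [mul_comm, abs_mul, abs_mul, abs_of_pos (rpow_pos_of_pos hτ _),
            abs_of_pos (rpow_pos_of_pos hτ _)]
          exact mul_le_mul_of_nonneg_left (rpow_le_rpow_of_exponent_ge hτ hτ1 has) (abs_nonneg _)
      _ ≤ 1 / a := (abs_log_mul_self_rpow_lt τ a hτ hτ1 ha).le
      _ ≤ 1 / a + x ^ b * |log x| := le_add_of_nonneg_right (by positivity)
  · calc |τ ^ s * log τ| ≤ x ^ b * |log x| := by
          rw [abs_mul, abs_of_pos (rpow_pos_of_pos hτ _), abs_of_pos (log_pos hτ1),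
            abs_of_pos (log_pos (hτ1.trans_le hτx))]
          exact mul_le_mul ((rpow_le_rpow_of_exponent_le hτ1.le hsb).trans
            (rpow_le_rpow hτ.le hτx (by linarith))) (log_le_log hτ hτx) (log_pos hτ1).le
            (by positivity)
      _ ≤ 1 / a + x ^ b * |log x| := le_add_of_nonneg_left (by positivity)

theorem hasDerivAt_integral_sub_rpow_mul_rpow {α x s₀ : ℝ} (hα : 0 < α) (hx : 0 < x)
    (hs₀ : 0 < s₀) :
    HasDerivAt (fun s ↦ ∫ τ in (0 : ℝ)..x, (x - τ) ^ (α - 1) * τ ^ s)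
      (∫ τ in (0 : ℝ)..x, (x - τ) ^ (α - 1) * (τ ^ s₀ * log τ)) s₀ := by
  set C := 1 / (s₀ / 2) + x ^ (3 * s₀ / 2) * |log x|
  have hweight := intervalIntegrable_sub_rpow hα x
  have hIoc : uIoc (0 : ℝ) x = Ioc 0 x := uIoc_of_le hx.le
  refine (intervalIntegral.hasDerivAt_integral_of_dominated_loc_of_deriv_le
    (F := fun s τ ↦ (x - τ) ^ (α - 1) * τ ^ s)
    (F' := fun s τ ↦ (x - τ) ^ (α - 1) * (τ ^ s * log τ))
    (bound := fun τ ↦ C * (x - τ) ^ (α - 1)) (Metric.ball_mem_nhds s₀ (half_pos hs₀))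
    (.of_forall fun s ↦ by fun_prop)
    (hweight.mul_continuousOn (continuous_rpow_const hs₀.le).continuousOn)
    (by fun_prop) ?_ (hweight.const_mul C) ?_).2
  · rw [hIoc]
    refine .of_forall fun τ hτ s hs ↦ ?_
    rw [Real.ball_eq_Ioo] at hs
    have hweight_nonneg := rpow_nonneg (sub_nonneg.2 hτ.2) (α - 1)
    rw [norm_mul, norm_of_nonneg hweight_nonneg, mul_comm]
    refine mul_le_mul_of_nonneg_right
      (abs_rpow_mul_log_le (half_pos hs₀) ?_ ?_ hτ.1 hτ.2) hweight_nonneg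
    · linarith [hs.1]
    · linarith [hs.2]
  · rw [hIoc]
    exact .of_forall fun τ hτ s _ ↦ (hasStrictDerivAt_const_rpow hτ.1 s).hasDerivAt.const_mul _

theorem hasDerivAt_Gamma_of_pos {s : ℝ} (hs : 0 < s) : HasDerivAt Gamma (deriv Gamma s) s :=
  (differentiableOn_Gamma_Ioi.differentiableAt (Ioi_mem_nhds hs)).hasDerivAt

theorem hasDerivAt_Gamma_div_Gamma_mul_rpow {α x s₀ : ℝ} (hα : 0 < α) (hx : 0 < x)
    (hs₀ : -1 < s₀) :
    HasDerivAt (fun s ↦ Gamma (s + 1) * Gamma α / Gamma (s + 1 + α) * x ^ (s + α))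
      (Gamma (s₀ + 1) * Gamma α / Gamma (s₀ + 1 + α) * x ^ (s₀ + α) *
        (log x + deriv Gamma (s₀ + 1) / Gamma (s₀ + 1) -
          deriv Gamma (s₀ + 1 + α) / Gamma (s₀ + 1 + α))) s₀ := by
  have hΓ₁ := (Gamma_pos_of_pos (by linarith : 0 < s₀ + 1)).ne'
  have hΓ₂ := (Gamma_pos_of_pos (by linarith : 0 < s₀ + 1 + α)).ne'
  have hd₁ := (hasDerivAt_Gamma_of_pos (by linarith : 0 < s₀ + 1)).comp_add_const s₀ 1
  have hd₂ : HasDerivAt (fun s ↦ Gamma (s + 1 + α)) (deriv Gamma (s₀ + 1 + α)) s₀ := by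
    simpa only [add_assoc] using
      (hasDerivAt_Gamma_of_pos (by linarith : 0 < s₀ + (1 + α))).comp_add_const s₀ (1 + α)
  have hd₃ := (hasStrictDerivAt_const_rpow hx (s₀ + α)).hasDerivAt.comp_add_const s₀ α
  refine (((hd₁.mul_const (Gamma α)).div hd₂ hΓ₂).mul hd₃).congr_deriv ?_
  simp only [Pi.div_apply]
  field_simp
  ring

theorem integral_sub_rpow_mul_rpow_mul_log {α s x : ℝ} (hα : 0 < α) (hs : 0 < s) (hx : 0 < x) :
    ∫ τ in (0 : ℝ)..x, (x - τ) ^ (α - 1) * (τ ^ s * log τ) =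
      Gamma (s + 1) * Gamma α / Gamma (s + 1 + α) * x ^ (s + α) *
        (log x + deriv Gamma (s + 1) / Gamma (s + 1) -
          deriv Gamma (s + 1 + α) / Gamma (s + 1 + α)) := by
  have hbeta : (fun s ↦ ∫ τ in (0 : ℝ)..x, (x - τ) ^ (α - 1) * τ ^ s) =ᶠ[nhds s]
      fun s ↦ Gamma (s + 1) * Gamma α / Gamma (s + 1 + α) * x ^ (s + α) := by
    filter_upwards [eventually_gt_nhds (by linarith : -1 < s)] with s hs
    exact integral_sub_rpow_mul_rpow hα hs hx
  exact (hasDerivAt_integral_sub_rpow_mul_rpow hα hx hs).unique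
    ((hasDerivAt_Gamma_div_Gamma_mul_rpow hα hx (by linarith)).congr_of_eventuallyEq hbeta)

theorem rl_integral_thin_plate_zero (α : ℝ) (hα : 0 < α) (n : ℕ) (hn : 1 ≤ n)
    (x : ℝ) (hx : 0 < x) :
    (1 / Real.Gamma α) * ∫ τ in (0 : ℝ)..x, (x - τ) ^ (α - 1) * (τ ^ (2 * n) * Real.log τ) =
      (Real.Gamma (2 * n + 1) / Real.Gamma (2 * n + 1 + α)) * x ^ (2 * (n : ℝ) + α) *
        (Real.log x + deriv Real.Gamma (2 * n + 1) / Real.Gamma (2 * n + 1) -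
          deriv Real.Gamma (2 * n + 1 + α) / Real.Gamma (2 * n + 1 + α)) := by
  have h2n : (0 : ℝ) < 2 * n := by positivity
  simp_rw [← rpow_natCast, Nat.cast_mul, Nat.cast_ofNat]
  rw [integral_sub_rpow_mul_rpow_mul_log hα h2n hx]
  field_simp [(Gamma_pos_of_pos hα).ne']
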